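/- Let T > R > P > S, 2R > T + S, R > 0 and H ≤ 0, and let σ and τ be strategies in the N-round FTPD game such that each player's total payoff when σ plays against τ equals N·R. Then the induced play path is a_k = C and b_k = C for every round k with 1 ≤ k ≤ N. -/
import Mathlib


/-- Moves of the FTPD stage game: Cooperate, Defect, Wait. -/
inductive Move where
  | C | D | W
deriving DecidableEq

open Move

/-- The row player's stage payoff in the FTPD game. -/
def u (T R P S H : ℝ) : Move → Move → ℝ
  | C, C => R
  | C, D => S
  | D, C => T
  | D, D => P
  | W, W => H
  | W, _ => 0
  | _, W => 0

/-- A strategy maps the opponent's past moves to a move. -/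
def Strategy : Type := List Move → Move

/-- `hists σ τ k = ([a_1, …, a_k], [b_1, …, b_k])`: the histories of moves of
the two players after `k` rounds, where `a_i = σ [b_1, …, b_{i-1}]` and
`b_i = τ [a_1, …, a_{i-1}]`. -/
def hists (σ τ : Strategy) : ℕ → List Move × List Move
  | 0 => ([], [])
  | k + 1 =>
    let h := hists σ τ k
    (h.1 ++ [σ h.2], h.2 ++ [τ h.1])

/-- `moveA σ τ k = a_{k+1}`, the first player's move in round `k+1`. -/
def moveA (σ τ : Strategy) (k : ℕ) : Move := σ (hists σ τ k).2

/-- `moveB σ τ k = b_{k+1}`, the second player's move in round `k+1`. -/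
def moveB (σ τ : Strategy) (k : ℕ) : Move := τ (hists σ τ k).1

/-- The total payoff of the first player (playing `σ`) over `N` rounds. -/
def payoffA (T R P S H : ℝ) (σ τ : Strategy) (N : ℕ) : ℝ :=
  ∑ k ∈ Finset.range N, u T R P S H (moveA σ τ k) (moveB σ τ k)

/-- The total payoff of the second player (playing `τ`) over `N` rounds. -/
def payoffB (T R P S H : ℝ) (σ τ : Strategy) (N : ℕ) : ℝ :=
  ∑ k ∈ Finset.range N, u T R P S H (moveB σ τ k) (moveA σ τ k)

/-- If both players' total payoffs over the `N`-round FTPD game equal `N·R`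
(under the Prisoner's Dilemma conditions with `R > 0` and `H ≤ 0`), then
both players cooperated in every round. -/
theorem payoff_NR_implies_all_cooperate (T R P S H : ℝ)
    (hTR : T > R) (hRP : R > P) (hPS : P > S) (h2R : 2 * R > T + S)
    (hR : R > 0) (hH : H ≤ 0) (N : ℕ) (σ τ : Strategy)
    (hA : payoffA T R P S H σ τ N = N * R)
    (hB : payoffB T R P S H σ τ N = N * R) :
    ∀ k < N, moveA σ τ k = C ∧ moveB σ τ k = C := by
  have key : ∀ a b : Move, u T R P S H a b + u T R P S H b a ≤ 2 * R := by
    intro a b; cases a <;> cases b <;> simp [u] <;> linarith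
  have keyeq : ∀ a b : Move, u T R P S H a b + u T R P S H b a = 2 * R →
      a = C ∧ b = C := by
    intro a b h
    cases a <;> cases b <;> simp_all [u] <;> linarith
  have hsum : ∑ k ∈ Finset.range N,
      (2 * R - (u T R P S H (moveA σ τ k) (moveB σ τ k)
        + u T R P S H (moveB σ τ k) (moveA σ τ k))) = 0 := by
    rw [Finset.sum_sub_distrib, Finset.sum_add_distrib]
    have := hA; have := hB
    unfold payoffA at hA; unfold payoffB at hB
    rw [hA, hB, Finset.sum_const, Finset.card_range]
    push_cast; ring
  have hzero := (Finset.sum_eq_zero_iff_of_nonneg (fun k _ => by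
    have := key (moveA σ τ k) (moveB σ τ k); linarith)).mp hsum
  intro k hk
  have := hzero k (Finset.mem_range.mpr hk)
  exact keyeq _ _ (by linarith)
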